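/- arXiv:math/0508066 — 3 statements merged into one kernel-verified Lean document; each statement's English description precedes it below -/
import Mathlib

section
/- The sign of a dissection is multiplicative under refinement: if D' ⊇ D are dissections of an R-deco polygon π with D admissible, then sgn(D') = sgn(D) · ∏_α sgn(D_α, π_α), where the product is over the arrows α of D (including the root arrow) and D_α is the dissection induced by D' on the subpolygon π_α cut off by α. -/
section Dissections

variable {ι : Type} [Fintype ι] [DecidableEq ι]

/-- The arrows of `E` directly visible under `α`: the maximal elements of `E` strictly
below `α` in the nesting order `lt` of arrows. -/
def maxBelow (lt : ι → ι → Prop) [DecidableRel lt] (E : Finset ι) (α : ι) : Finset ι :=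
  E.filter fun β => lt β α ∧ ∀ γ ∈ E, lt β γ → ¬ lt γ α

/-- The weight `χ(π^⊔_{E,α})` of the polygon sitting directly under the arrow `α` in
the dissection `E`: the intrinsic weight `w α` of the full region under `α` minus the
weights of the regions under the arrows of `E` directly visible under `α`. -/
def chiIn (lt : ι → ι → Prop) [DecidableRel lt] (w : ι → ℤ) (E : Finset ι) (α : ι) : ℤ :=
  w α - ∑ β ∈ maxBelow lt E α, w β

/-- The sign of a dissection `E`: `sgn(E) = ∏_{α ∈ E} ε_α^{χ(π^⊔_{E,α})}`, where
`ε_α = ±1` records whether `α` is a forward or backward arrow. -/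
def sgnD (lt : ι → ι → Prop) [DecidableRel lt] (ε : ι → ℤˣ) (w : ι → ℤ)
    (E : Finset ι) : ℤˣ :=
  ∏ α ∈ E, ε α ^ chiIn lt w E α

end Dissections

/-! Split `D'` into the arrows of `D`, the arrows below each `α ∈ D`, and the root arrows.
The polygon directly under an arrow only sees arrows below it, so `α` and its descendants
can be treated inside `D_α`, where the weights of the polygons directly under them add up to
`w α`; as `ε_α² = 1` this turns `ε_α^{χ(π_α^⊔)}` into `ε_α^{w α}`, the factor of `α` in
`sgn(D)`, times one factor `ε_α^{χ(π_γ^⊔)}` per descendant `γ`. For a root arrow, removing the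
regions under the arrows of `D` from all weights does not change the polygon directly under it.
-/

open Finset

lemma Finset.exists_mem_forall_not_rel {α : Type*} [Finite α] (r : α → α → Prop)
    [IsStrictOrder α r] {S : Finset α} (hS : S.Nonempty) : ∃ m ∈ S, ∀ x ∈ S, ¬ r x m :=
  (Finite.wellFounded_of_trans_of_irrefl r).has_min (S : Set α) hS

lemma Finset.prod_zpow_eq_zpow_sum {α G : Type*} [CommGroup G] (g : G) (s : Finset α)
    (f : α → ℤ) : ∏ i ∈ s, g ^ f i = g ^ ∑ i ∈ s, f i := by
  induction s using Finset.cons_induction with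
  | empty => simp
  | cons a s ha ih => rw [prod_cons, sum_cons, ih, zpow_add]

lemma Int.units_zpow_mul_prod_zpow {α : Type*} (u : ℤˣ) (v : α → ℤˣ) (s : Finset α)
    (x : α → ℤ) {c n : ℤ} (h : c + ∑ i ∈ s, x i = n) :
    u ^ c * ∏ i ∈ s, v i ^ x i = u ^ n * ∏ i ∈ s, (u * v i) ^ x i := by
  simp only [← h, mul_zpow, prod_mul_distrib, prod_zpow_eq_zpow_sum, zpow_add]
  rw [mul_assoc, ← mul_assoc (u ^ ∑ i ∈ s, x i), Int.units_mul_self, one_mul]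

lemma pairwiseDisjoint_insert_filter_lt {ι : Type*} [DecidableEq ι] {lt : ι → ι → Prop}
    [DecidableRel lt] (hforest : ∀ β α α', lt β α → lt β α' → α = α' ∨ lt α α' ∨ lt α' α)
    {D : Finset ι} (hD : ∀ α ∈ D, ∀ β ∈ D, ¬ lt α β) (E : Finset ι) :
    (D : Set ι).PairwiseDisjoint fun α => insert α (E.filter (lt · α)) := by
  intro α hα α' hα' hne
  refine disjoint_left.2 fun γ hγ hγ' => ?_
  simp only [mem_insert, mem_filter] at hγ hγ'
  rcases hγ with rfl | ⟨-, hγα⟩ <;> rcases hγ' with rfl | ⟨-, hγα'⟩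
  · exact hne rfl
  · exact hD γ hα α' hα' hγα'
  · exact hD γ hα' α hα hγα
  · rcases hforest γ α α' hγα hγα' with h | h | h
    · exact hne h
    · exact hD α hα α' hα' h
    · exact hD α' hα' α hα h

section Refinement

variable {ι : Type} [Fintype ι] [DecidableEq ι] {lt : ι → ι → Prop} [DecidableRel lt]

@[simp]
lemma mem_maxBelow {E : Finset ι} {α β : ι} :
    β ∈ maxBelow lt E α ↔ β ∈ E ∧ lt β α ∧ ∀ γ ∈ E, lt β γ → ¬ lt γ α :=
  mem_filter

lemma maxBelow_subset {E : Finset ι} {α : ι} : maxBelow lt E α ⊆ E :=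
  filter_subset _ E

lemma maxBelow_filter_lt (E : Finset ι) {α γ : ι} (hγ : ∀ β, lt β γ → lt β α) :
    maxBelow lt (E.filter (lt · α)) γ = maxBelow lt E γ := by
  ext β
  simp only [mem_maxBelow, mem_filter]
  exact ⟨fun ⟨⟨hβ, _⟩, hβγ, hmax⟩ => ⟨hβ, hβγ, fun δ hδ hβδ hδγ => hmax δ ⟨hδ, hγ δ hδγ⟩ hβδ hδγ⟩,
    fun ⟨hβ, hβγ, hmax⟩ => ⟨⟨hβ, hγ β hβγ⟩, hβγ, fun δ hδ => hmax δ hδ.1⟩⟩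

lemma chiIn_filter_lt (w : ι → ℤ) (E : Finset ι) {α γ : ι} (hγ : ∀ β, lt β γ → lt β α) :
    chiIn lt w (E.filter (lt · α)) γ = chiIn lt w E γ := by
  rw [chiIn, chiIn, maxBelow_filter_lt E hγ]

lemma pairwiseDisjoint_maxBelow
    (hforest : ∀ β α α', lt β α → lt β α' → α = α' ∨ lt α α' ∨ lt α' α) (E : Finset ι) :
    (E : Set ι).PairwiseDisjoint (maxBelow lt E) := by
  intro γ hγ γ' hγ' hne
  refine disjoint_left.2 fun β hβ hβ' => ?_
  obtain ⟨-, hβγ, hmax⟩ := mem_maxBelow.1 hβ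
  obtain ⟨-, hβγ', hmax'⟩ := mem_maxBelow.1 hβ'
  rcases hforest β γ γ' hβγ hβγ' with h | h | h
  · exact hne h
  · exact hmax' γ hγ hβγ h
  · exact hmax γ' hγ' hβγ' h

/-- Every arrow of `E` below `top` that is not directly visible from `top` is directly
visible from exactly one arrow of `E`, namely the lowest arrow of `E` above it. -/
lemma biUnion_maxBelow [IsStrictOrder ι lt] {E : Finset ι} {top : ι}
    (hE : ∀ γ ∈ E, lt γ top) : E.biUnion (maxBelow lt E) = E \ maxBelow lt E top := by
  ext β
  simp only [mem_biUnion, mem_sdiff, mem_maxBelow]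
  constructor
  · rintro ⟨γ, hγ, hβE, hβγ, -⟩
    exact ⟨hβE, fun ⟨_, _, hmax⟩ => hmax γ hγ hβγ (hE γ hγ)⟩
  · rintro ⟨hβE, hnotmax⟩
    have hne : (E.filter (lt β ·)).Nonempty := by
      by_contra hempty
      refine hnotmax ⟨hβE, hE β hβE, fun δ hδ hβδ _ => hempty ⟨δ, mem_filter.2 ⟨hδ, hβδ⟩⟩⟩
    obtain ⟨γ, hγ, hmin⟩ := exists_mem_forall_not_rel lt hne
    obtain ⟨hγE, hβγ⟩ := mem_filter.1 hγ
    exact ⟨γ, hγE, hβE, hβγ, fun δ hδ hβδ => hmin δ (mem_filter.2 ⟨hδ, hβδ⟩)⟩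

lemma sum_chiIn_of_forall_lt [IsStrictOrder ι lt]
    (hforest : ∀ β α α', lt β α → lt β α' → α = α' ∨ lt α α' ∨ lt α' α)
    (w : ι → ℤ) {E : Finset ι} {top : ι} (hE : ∀ γ ∈ E, lt γ top) :
    ∑ γ ∈ E, chiIn lt w E γ = w top - chiIn lt w E top := by
  have hsum : ∑ γ ∈ E, ∑ β ∈ maxBelow lt E γ, w β
      = ∑ β ∈ E, w β - ∑ β ∈ maxBelow lt E top, w β := by
    rw [← sum_biUnion (pairwiseDisjoint_maxBelow hforest E), biUnion_maxBelow hE,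
      sum_sdiff_eq_sub maxBelow_subset]
  simp only [chiIn, sum_sub_distrib, hsum]
  ring

lemma zpow_chiIn_mul_prod_filter_lt [IsStrictOrder ι lt]
    (hforest : ∀ β α α', lt β α → lt β α' → α = α' ∨ lt α α' ∨ lt α' α)
    (ε : ι → ℤˣ) (w : ι → ℤ) (E : Finset ι) (α : ι) :
    ε α ^ chiIn lt w E α * ∏ γ ∈ E.filter (lt · α), ε γ ^ chiIn lt w E γ
      = ε α ^ w α * ∏ γ ∈ E.filter (lt · α), (ε α * ε γ) ^ chiIn lt w (E.filter (lt · α)) γ := by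
  have hbelow : ∀ γ ∈ E.filter (lt · α), chiIn lt w E γ = chiIn lt w (E.filter (lt · α)) γ :=
    fun γ hγ => (chiIn_filter_lt w E fun _ hβ => _root_.trans hβ (mem_filter.1 hγ).2).symm
  rw [prod_congr rfl fun γ hγ => by rw [hbelow γ hγ],
    ← chiIn_filter_lt (α := α) (γ := α) w E fun _ h => h]
  refine Int.units_zpow_mul_prod_zpow _ _ _ _ ?_
  rw [sum_chiIn_of_forall_lt hforest w fun γ hγ => (mem_filter.1 hγ).2]
  ring

lemma chiIn_of_forall_not_lt {D : Finset ι} (hD : ∀ α ∈ D, ∀ β ∈ D, ¬ lt α β) (w : ι → ℤ)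
    {α : ι} (hα : α ∈ D) : chiIn lt w D α = w α := by
  rw [chiIn, sum_eq_zero fun β hβ => (hD β (maxBelow_subset hβ) α hα (mem_maxBelow.1 hβ).2.1).elim,
    sub_zero]

lemma sgnD_of_forall_not_lt {D : Finset ι} (hD : ∀ α ∈ D, ∀ β ∈ D, ¬ lt α β) (ε : ι → ℤˣ)
    (w : ι → ℤ) : sgnD lt ε w D = ∏ α ∈ D, ε α ^ w α :=
  prod_congr rfl fun α hα => by rw [chiIn_of_forall_not_lt hD w hα]

variable (lt) in
def rootArrows (D D' : Finset ι) : Finset ι :=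
  D'.filter fun γ => γ ∉ D ∧ ∀ α ∈ D, ¬ lt γ α

@[simp]
lemma mem_rootArrows {D D' : Finset ι} {γ : ι} :
    γ ∈ rootArrows lt D D' ↔ γ ∈ D' ∧ γ ∉ D ∧ ∀ α ∈ D, ¬ lt γ α :=
  mem_filter

lemma exists_lt_of_notMem_rootArrows {D D' : Finset ι} {δ : ι} (hδ : δ ∈ D') (hδD : δ ∉ D)
    (hδR : δ ∉ rootArrows lt D D') : ∃ α ∈ D, lt δ α := by
  by_contra! h
  exact hδR (mem_rootArrows.2 ⟨hδ, hδD, h⟩)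

lemma prod_eq_prod_mul_prod_rootArrows {M : Type*} [CommMonoid M] [Std.Irrefl lt]
    (hforest : ∀ β α α', lt β α → lt β α' → α = α' ∨ lt α α' ∨ lt α' α)
    {D D' : Finset ι} (hsub : D ⊆ D') (hD : ∀ α ∈ D, ∀ β ∈ D, ¬ lt α β) (f : ι → M) :
    ∏ γ ∈ D', f γ
      = (∏ α ∈ D, (f α * ∏ γ ∈ D'.filter (lt · α), f γ)) * ∏ γ ∈ rootArrows lt D D', f γ := by
  set B := D.biUnion fun α => insert α (D'.filter (lt · α))
  have hdisj : Disjoint B (rootArrows lt D D') := by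
    refine disjoint_left.2 fun γ hγB hγR => ?_
    obtain ⟨-, hγD, hγroot⟩ := mem_rootArrows.1 hγR
    obtain ⟨α, hα, hγ⟩ := mem_biUnion.1 hγB
    rcases mem_insert.1 hγ with rfl | hγα
    · exact hγD hα
    · exact hγroot α hα (mem_filter.1 hγα).2
  have hunion : B ∪ rootArrows lt D D' = D' := by
    ext γ
    simp only [B, mem_union, mem_biUnion, mem_insert, mem_filter]
    constructor
    · rintro (⟨α, hα, rfl | ⟨hγ, -⟩⟩ | hγ)
      exacts [hsub hα, hγ, (mem_rootArrows.1 hγ).1]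
    · intro hγ
      by_cases hγD : γ ∈ D
      · exact Or.inl ⟨γ, hγD, Or.inl rfl⟩
      by_cases hγR : γ ∈ rootArrows lt D D'
      · exact Or.inr hγR
      obtain ⟨α, hα, hγα⟩ := exists_lt_of_notMem_rootArrows hγ hγD hγR
      exact Or.inl ⟨α, hα, Or.inr ⟨hγ, hγα⟩⟩
  calc ∏ γ ∈ D', f γ = ∏ γ ∈ B ∪ rootArrows lt D D', f γ := by rw [hunion]
    _ = _ := by
      rw [prod_union hdisj, prod_biUnion (pairwiseDisjoint_insert_filter_lt hforest hD D')]
      exact congrArg (· * _) (prod_congr rfl fun α _ =>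
        prod_insert fun h => irrefl α (mem_filter.1 h).2)

lemma filter_maxBelow_notMem_eq_maxBelow_rootArrows [IsTrans ι lt]
    (hforest : ∀ β α α', lt β α → lt β α' → α = α' ∨ lt α α' ∨ lt α' α)
    {D D' : Finset ι} (hsub : D ⊆ D') {γ : ι} (hγD : γ ∉ D) (hγR : ∀ α ∈ D, ¬ lt γ α) :
    (maxBelow lt D' γ).filter (· ∉ D) = maxBelow lt (rootArrows lt D D') γ := by
  ext β
  simp only [mem_filter, mem_maxBelow, mem_rootArrows]
  constructor
  · rintro ⟨⟨hβD', hβγ, hmax⟩, hβD⟩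
    refine ⟨⟨hβD', hβD, fun α hα hβα => ?_⟩, hβγ, fun δ hδ => hmax δ hδ.1⟩
    rcases hforest β α γ hβα hβγ with rfl | h | h
    · exact hγD hα
    · exact hmax α (hsub hα) hβα h
    · exact hγR α hα h
  · rintro ⟨⟨hβD', hβD, hβroot⟩, hβγ, hmax⟩
    refine ⟨⟨hβD', hβγ, fun δ hδ hβδ hδγ => ?_⟩, hβD⟩
    by_cases hδD : δ ∈ D
    · exact hβroot δ hδD hβδ
    by_cases hδR : δ ∈ rootArrows lt D D'
    · exact hmax δ (mem_rootArrows.1 hδR) hβδ hδγ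
    obtain ⟨α, hα, hδα⟩ := exists_lt_of_notMem_rootArrows hδ hδD hδR
    exact hβroot α hα (_root_.trans hβδ hδα)

/-- An arrow of `D` below `γ` is either directly visible from `γ` in `D'`, or it lies under
the highest root arrow between it and `γ`. -/
lemma filter_lt_eq_union_biUnion_rootArrows [IsStrictOrder ι lt] {D D' : Finset ι}
    (hsub : D ⊆ D') (hD : ∀ α ∈ D, ∀ β ∈ D, ¬ lt α β) (γ : ι) :
    D.filter (lt · γ) = (maxBelow lt D' γ).filter (· ∈ D) ∪
      (maxBelow lt (rootArrows lt D D') γ).biUnion fun β => D.filter (lt · β) := by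
  ext α
  simp only [mem_union, mem_biUnion, mem_filter, mem_maxBelow]
  constructor
  · rintro ⟨hαD, hαγ⟩
    by_cases hmax : ∀ δ ∈ D', lt α δ → ¬ lt δ γ
    · exact Or.inl ⟨⟨hsub hαD, hαγ, hmax⟩, hαD⟩
    push Not at hmax
    obtain ⟨δ, hδ, hαδ, hδγ⟩ := hmax
    have hbetween : ∀ δ ∈ D', lt α δ → δ ∈ rootArrows lt D D' := by
      intro δ hδ hαδ
      by_contra hδR
      by_cases hδD : δ ∈ D
      · exact hD α hαD δ hδD hαδ
      obtain ⟨α', hα', hδα'⟩ := exists_lt_of_notMem_rootArrows hδ hδD hδR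
      exact hD α hαD α' hα' (_root_.trans hαδ hδα')
    have hne : ((rootArrows lt D D').filter fun δ => lt α δ ∧ lt δ γ).Nonempty :=
      ⟨δ, mem_filter.2 ⟨hbetween δ hδ hαδ, hαδ, hδγ⟩⟩
    obtain ⟨β, hβ, hβmax⟩ := exists_mem_forall_not_rel (Function.swap lt) hne
    obtain ⟨hβR, hαβ, hβγ⟩ := mem_filter.1 hβ
    exact Or.inr ⟨β, ⟨hβR, hβγ, fun δ hδ hβδ hδγ =>
      hβmax δ (mem_filter.2 ⟨hδ, _root_.trans hαβ hβδ, hδγ⟩) hβδ⟩, hαD, hαβ⟩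
  · rintro (⟨⟨-, hαγ, -⟩, hαD⟩ | ⟨β, ⟨-, hβγ, -⟩, hαD, hαβ⟩)
    exacts [⟨hαD, hαγ⟩, ⟨hαD, _root_.trans hαβ hβγ⟩]

lemma chiIn_rootArrows [IsStrictOrder ι lt]
    (hforest : ∀ β α α', lt β α → lt β α' → α = α' ∨ lt α α' ∨ lt α' α)
    (w : ι → ℤ) {D D' : Finset ι} (hsub : D ⊆ D') (hD : ∀ α ∈ D, ∀ β ∈ D, ¬ lt α β)
    {γ : ι} (hγ : γ ∈ rootArrows lt D D') :
    chiIn lt (fun δ => w δ - ∑ α ∈ D.filter (lt · δ), w α) (rootArrows lt D D') γ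
      = chiIn lt w D' γ := by
  obtain ⟨-, hγD, hγR⟩ := mem_rootArrows.1 hγ
  set R := rootArrows lt D D'
  have hvisible : ∑ β ∈ maxBelow lt D' γ, w β
      = ∑ β ∈ (maxBelow lt D' γ).filter (· ∈ D), w β + ∑ β ∈ maxBelow lt R γ, w β := by
    rw [← filter_maxBelow_notMem_eq_maxBelow_rootArrows hforest hsub hγD hγR,
      sum_filter_add_sum_filter_not]
  have hdisj : Disjoint ((maxBelow lt D' γ).filter (· ∈ D))
      ((maxBelow lt R γ).biUnion fun β => D.filter (lt · β)) := by
    refine disjoint_left.2 fun α hαM hαB => ?_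
    obtain ⟨β, hβ, hαβ⟩ := mem_biUnion.1 hαB
    obtain ⟨-, -, hmax⟩ := mem_maxBelow.1 (mem_filter.1 hαM).1
    obtain ⟨hβR, hβγ, -⟩ := mem_maxBelow.1 hβ
    exact hmax β (mem_rootArrows.1 hβR).1 (mem_filter.1 hαβ).2 hβγ
  have hpairwise : ((maxBelow lt R γ : Finset ι) : Set ι).PairwiseDisjoint
      fun β => D.filter (lt · β) := by
    intro β hβ β' hβ' hne
    refine disjoint_left.2 fun α hα hα' => ?_
    obtain ⟨hβR, hβγ, hmax⟩ := mem_maxBelow.1 hβ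
    obtain ⟨hβ'R, hβ'γ, hmax'⟩ := mem_maxBelow.1 hβ'
    rcases hforest α β β' (mem_filter.1 hα).2 (mem_filter.1 hα').2 with h | h | h
    · exact hne h
    · exact hmax β' hβ'R h hβ'γ
    · exact hmax' β hβR h hβγ
  have hbelow : ∑ α ∈ D.filter (lt · γ), w α
      = ∑ β ∈ (maxBelow lt D' γ).filter (· ∈ D), w β
        + ∑ β ∈ maxBelow lt R γ, ∑ α ∈ D.filter (lt · β), w α := by
    rw [filter_lt_eq_union_biUnion_rootArrows hsub hD, sum_union hdisj, sum_biUnion hpairwise]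
  simp only [chiIn, sum_sub_distrib]
  linarith

end Refinement

/-- The factor of `α ∈ D` is `sgn(D_α, π_α)`: inside `π_α` the arrow `γ` carries the sign
`ε_α · ε_γ`. The root polygon of `D` carries the weights of `D'` with the regions under the
arrows of `D` removed. -/
theorem sign_multiplicative_under_refinement
    (ι : Type) [Fintype ι] [DecidableEq ι]
    (lt : ι → ι → Prop) [DecidableRel lt]
    (htrans : Transitive lt) (hirr : ∀ x, ¬ lt x x)
    (hforest : ∀ β α α', lt β α → lt β α' → α = α' ∨ lt α α' ∨ lt α' α)
    (ε : ι → ℤˣ) (w : ι → ℤ)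
    (D D' : Finset ι) (hsub : D ⊆ D')
    (hadm : ∀ α ∈ D, ∀ β ∈ D, ¬ lt α β) :
    sgnD lt ε w D'
      = sgnD lt ε w D *
        ((∏ α ∈ D, ∏ γ ∈ D'.filter (fun γ => lt γ α),
            (ε α * ε γ) ^ chiIn lt w (D'.filter (fun γ => lt γ α)) γ) *
         (∏ γ ∈ D'.filter (fun γ => γ ∉ D ∧ ∀ α ∈ D, ¬ lt γ α),
            ε γ ^ chiIn lt (fun δ => w δ - ∑ α ∈ D.filter (fun α => lt α δ), w α)
              (D'.filter (fun γ => γ ∉ D ∧ ∀ α ∈ D, ¬ lt γ α)) γ)) := by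
  have : IsStrictOrder ι lt := { irrefl := hirr, trans := fun _ _ _ => @htrans _ _ _ }
  rw [sgnD, prod_eq_prod_mul_prod_rootArrows hforest hsub hadm,
    prod_congr rfl fun α _ => zpow_chiIn_mul_prod_filter_lt hforest ε w D' α,
    prod_mul_distrib, ← sgnD_of_forall_not_lt hadm, mul_assoc]
  congr 2
  exact prod_congr rfl fun γ hγ => congrArg (ε γ ^ ·) (chiIn_rootArrows hforest w hsub hadm hγ).symm
end

section
/- Level structures factor across an admissible cut: for a rooted tree τ with an admissible cut C separating τ into a root piece τ_R and a forest φ of remaining pieces, the level structures on τ for which C is realized as a horizontal cut are in bijection with pairs of (a level structure on τ_R, a level structure on φ). -/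
/-!
A labelling realizing the cut gives the root piece exactly the labels below
`k = |τ_R|`, since the `|φ|` labels of the forest all lie above each root-piece label and
vice versa. Hence it is obtained by stacking a labelling of `τ_R` under a labelling of `φ`
shifted by `k`, and as `τ_R` is downward closed, the stacked labelling is monotone exactly
when both pieces are.
-/

open Fintype

noncomputable section Labelling

variable {α : Type*} [Fintype α] (p : α → Prop) [DecidablePred p]

theorem card_subtype_add_card_subtype_not :
    card {a // p a} + card {a // ¬p a} = card α := by
  rw [← card_sum, card_congr (Equiv.sumCompl p)]

def IsHorizontalCut (f : α ≃ Fin (card α)) : Prop :=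
  ∀ a b, p a → ¬p b → f a < f b

def stackLabellings (g : {a // p a} ≃ Fin (card {a // p a}))
    (h : {a // ¬p a} ≃ Fin (card {a // ¬p a})) : α ≃ Fin (card α) :=
  (Equiv.sumCompl p).symm.trans <| (g.sumCongr h).trans <|
    finSumFinEquiv.trans (finCongr (card_subtype_add_card_subtype_not p))

variable {p}
variable (g : {a // p a} ≃ Fin (card {a // p a})) (h : {a // ¬p a} ≃ Fin (card {a // ¬p a}))

theorem stackLabellings_apply_of_pos {a : α} (ha : p a) :
    (stackLabellings p g h a : ℕ) = g ⟨a, ha⟩ := by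
  simp [stackLabellings, Equiv.sumCompl_symm_apply_of_pos ha]

theorem stackLabellings_apply_of_neg {a : α} (ha : ¬p a) :
    (stackLabellings p g h a : ℕ) = card {a // p a} + h ⟨a, ha⟩ := by
  simp [stackLabellings, Equiv.sumCompl_symm_apply_of_neg ha]

theorem isHorizontalCut_stackLabellings : IsHorizontalCut p (stackLabellings p g h) := by
  intro a b ha hb
  rw [Fin.lt_def, stackLabellings_apply_of_pos g h ha, stackLabellings_apply_of_neg g h hb]
  exact Nat.lt_add_right _ (g ⟨a, ha⟩).isLt

theorem monotone_stackLabellings_iff [Preorder α] (hp : IsLowerSet {a | p a}) :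
    Monotone (stackLabellings p g h) ↔ Monotone g ∧ Monotone h := by
  constructor
  · intro hf
    refine ⟨fun a b hab => ?_, fun a b hab => ?_⟩
    · have := hf (show (a : α) ≤ b from hab)
      rwa [Fin.le_def, stackLabellings_apply_of_pos g h a.2,
        stackLabellings_apply_of_pos g h b.2] at this
    · have := hf (show (a : α) ≤ b from hab)
      rwa [Fin.le_def, stackLabellings_apply_of_neg g h a.2,
        stackLabellings_apply_of_neg g h b.2, Nat.add_le_add_iff_left] at this
  · rintro ⟨hg, hh⟩ a b hab
    rw [Fin.le_def]
    by_cases hb : p b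
    · have ha : p a := hp hab hb
      rw [stackLabellings_apply_of_pos g h ha, stackLabellings_apply_of_pos g h hb]
      exact hg (show (⟨a, ha⟩ : {a // p a}) ≤ ⟨b, hb⟩ from hab)
    · by_cases ha : p a
      · exact (isHorizontalCut_stackLabellings g h a b ha hb).le
      · rw [stackLabellings_apply_of_neg g h ha, stackLabellings_apply_of_neg g h hb]
        exact Nat.add_le_add_left (hh (show (⟨a, ha⟩ : {a // ¬p a}) ≤ ⟨b, hb⟩ from hab)) _

variable {f : α ≃ Fin (card α)}

theorem val_lt_card_of_isHorizontalCut (hf : IsHorizontalCut p f) {a : α} (ha : p a) :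
    (f a : ℕ) < card {a // p a} := by
  have hle : card {b // ¬p b} ≤ card α - 1 - f a := by
    rw [← Fin.card_Ioi, ← Finset.card_univ]
    refine Finset.card_le_card_of_injOn (fun b => f b) (fun b _ => ?_) ?_
    · exact Finset.mem_Ioi.2 (hf a b ha b.2)
    · exact fun b _ c _ hbc => Subtype.ext (f.injective hbc)
  have := card_subtype_add_card_subtype_not p
  have := (f a).isLt
  omega

theorem card_le_val_of_isHorizontalCut (hf : IsHorizontalCut p f) {b : α} (hb : ¬p b) :
    card {a // p a} ≤ f b := by
  rw [← Fin.card_Iio, ← Finset.card_univ]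
  refine Finset.card_le_card_of_injOn (fun a => f a) (fun a _ => ?_) ?_
  · exact Finset.mem_Iio.2 (hf a b a.2 hb)
  · exact fun a _ c _ hac => Subtype.ext (f.injective hac)

def lowerLabelling (hf : IsHorizontalCut p f) : {a // p a} ≃ Fin (card {a // p a}) :=
  Equiv.ofBijective (fun a => ⟨f a, val_lt_card_of_isHorizontalCut hf a.2⟩) <|
    (Fintype.bijective_iff_injective_and_card _).2
      ⟨fun _ _ hab => Subtype.ext (f.injective (Fin.ext (Fin.mk.inj hab))), (card_fin _).symm⟩

def upperLabelling (hf : IsHorizontalCut p f) : {a // ¬p a} ≃ Fin (card {a // ¬p a}) :=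
  Equiv.ofBijective (fun b => ⟨f b - card {a // p a}, by
      have := card_subtype_add_card_subtype_not p
      have := card_le_val_of_isHorizontalCut hf b.2
      have := (f b).isLt
      omega⟩) <|
    (Fintype.bijective_iff_injective_and_card _).2
      ⟨fun a b hab => by
        have ha := card_le_val_of_isHorizontalCut hf a.2
        have hb := card_le_val_of_isHorizontalCut hf b.2
        have := Fin.mk.inj hab
        exact Subtype.ext (f.injective (Fin.ext (by omega))), (card_fin _).symm⟩

theorem stackLabellings_lowerLabelling_upperLabelling (hf : IsHorizontalCut p f) :
    stackLabellings p (lowerLabelling hf) (upperLabelling hf) = f := by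
  ext a
  by_cases ha : p a
  · exact stackLabellings_apply_of_pos _ _ ha
  · rw [stackLabellings_apply_of_neg _ _ ha]
    have := card_le_val_of_isHorizontalCut hf ha
    exact Nat.add_sub_cancel' this

theorem lowerLabelling_stackLabellings :
    lowerLabelling (isHorizontalCut_stackLabellings g h) = g := by
  ext a
  exact stackLabellings_apply_of_pos g h a.2

theorem upperLabelling_stackLabellings :
    upperLabelling (isHorizontalCut_stackLabellings g h) = h := by
  ext b
  exact Nat.sub_eq_of_eq_add' (stackLabellings_apply_of_neg g h b.2)

variable (p) in
def horizontalCutEquiv :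
    ({a // p a} ≃ Fin (card {a // p a})) × ({a // ¬p a} ≃ Fin (card {a // ¬p a})) ≃
      {f : α ≃ Fin (card α) // IsHorizontalCut p f} where
  toFun gh := ⟨stackLabellings p gh.1 gh.2, isHorizontalCut_stackLabellings gh.1 gh.2⟩
  invFun f := (lowerLabelling f.2, upperLabelling f.2)
  left_inv gh := Prod.ext (lowerLabelling_stackLabellings gh.1 gh.2)
    (upperLabelling_stackLabellings gh.1 gh.2)
  right_inv f := Subtype.ext (stackLabellings_lowerLabelling_upperLabelling f.2)

end Labelling

theorem level_structures_factor_across_cut_general (V : Type) [Fintype V]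
    [PartialOrder V] (r : V → Prop) [DecidablePred r]
    (hdown : ∀ a b : V, a ≤ b → r b → r a) :
    Nonempty
      ({f : V ≃ Fin (Fintype.card V) //
          (∀ a b : V, a ≤ b → (f a : ℕ) ≤ f b) ∧
          (∀ a b : V, r a → ¬ r b → (f a : ℕ) < f b)}
        ≃ ({g : {v : V // r v} ≃ Fin (Fintype.card {v : V // r v}) //
              ∀ a b : {v : V // r v}, (a : V) ≤ (b : V) → (g a : ℕ) ≤ g b}
           × {h : {v : V // ¬ r v} ≃ Fin (Fintype.card {v : V // ¬ r v}) //
              ∀ a b : {v : V // ¬ r v}, (a : V) ≤ (b : V) → (h a : ℕ) ≤ h b})) := by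
  have hr : IsLowerSet {v | r v} := fun a b hba ha => hdown b a hba ha
  refine ⟨Equiv.symm ?_⟩
  calc _ ≃ {gh : ({v // r v} ≃ Fin (card {v // r v})) × ({v // ¬r v} ≃ Fin (card {v // ¬r v}))
          // Monotone gh.1 ∧ Monotone gh.2} := Equiv.subtypeProdEquivProd.symm
    _ ≃ {f : {f : V ≃ Fin (card V) // IsHorizontalCut r f} // Monotone f.1} :=
        (horizontalCutEquiv r).subtypeEquiv fun _ => (monotone_stackLabellings_iff _ _ hr).symm
    _ ≃ _ := (Equiv.subtypeSubtypeEquivSubtypeInter (IsHorizontalCut r)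
          fun f : V ≃ Fin (card V) => Monotone f).trans
        (Equiv.subtypeEquivRight fun _ => and_comm)

/-- Level structures factor across an admissible cut.  Model: `V` is the
vertex poset of the rooted tree `τ` (roots minimal); an admissible cut separates `V`
into the root piece `{v | r v}` — which is downward closed — and the forest
`{v | ¬ r v}` of remaining pieces.  A level structure is a monotone bijection onto
`Fin (card)`; the cut `C` is realized as a horizontal cut of a level structure `f`
iff every root-piece vertex has a smaller label than every remaining vertex.  Claim:
level structures on `τ` realizing `C` are in bijection with pairs of (a level
structure on the root piece, a level structure on the forest). -/
theorem level_structures_factor_across_cut (V : Type) [Fintype V] [DecidableEq V]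
    [PartialOrder V] (r : V → Prop) [DecidablePred r]
    (hdown : ∀ a b : V, a ≤ b → r b → r a) :
    Nonempty
      ({f : V ≃ Fin (Fintype.card V) //
          (∀ a b : V, a ≤ b → (f a : ℕ) ≤ f b) ∧
          (∀ a b : V, r a → ¬ r b → (f a : ℕ) < f b)}
        ≃ ({g : {v : V // r v} ≃ Fin (Fintype.card {v : V // r v}) //
              ∀ a b : {v : V // r v}, (a : V) ≤ (b : V) → (g a : ℕ) ≤ g b}
           × {h : {v : V // ¬ r v} ≃ Fin (Fintype.card {v : V // ¬ r v}) //
              ∀ a b : {v : V // ¬ r v}, (a : V) ≤ (b : V) → (h a : ℕ) ≤ h b})) :=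
  level_structures_factor_across_cut_general V r hdown
end

section
/- The Totaro cycle C_a, the image in (P¹ \ {1})³ of the map t ↦ (t, 1-t, 1-a/t) from P¹, intersected with the faces z_i ∈ {0, ∞}, satisfies: its algebraic boundary is ∂C_a = [a, 1-a], coming only from the face z_3 = 0; all other faces give empty or degenerate intersections, provided a ∉ {0, 1}. -/
/-- A point of `P¹(F)`, modeled as `Option F` with `none` the point `∞`. -/
abbrev P1 (F : Type) := Option F

/-- A point of `(P¹)³` lies in the algebraic cube `□³ = (P¹ \ {1})³` iff none of its
coordinates equals `1`. -/
def inCube3 {F : Type} [Field F] (p : P1 F × P1 F × P1 F) : Prop :=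
  p.1 ≠ some 1 ∧ p.2.1 ≠ some 1 ∧ p.2.2 ≠ some 1

/-- The Totaro parametrization `t ↦ (t, 1 - t, 1 - a/t)` of `P¹`, with the values at
`t = ∞` and `t = 0` given by the evident limits `(∞, ∞, 1)` and `(0, 1, ∞)`. -/
def totaro {F : Type} [Field F] [DecidableEq F] (a : F) : P1 F → P1 F × P1 F × P1 F
  | none => (none, none, some 1)
  | some t => if t = 0 then (some 0, some 1, none)
      else (some t, some (1 - t), some (1 - a / t))

/-
A point of the curve in the cube has a finite parameter `t ∉ {0, 1}`: `t = ∞` gives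
`z₃ = 1` and `t = 0` gives `z₂ = 1`, while `t = 1` gives `z₁ = 1`. Such a point is
`(t, 1 - t, 1 - a/t)`, so none of its coordinates is `∞`, `z₁, z₂ ≠ 0`, and `z₃ = 0`
exactly when `t = a`.
-/

section Totaro

variable {F : Type} [Field F] [DecidableEq F] (a : F)

theorem totaro_some_of_ne_zero {t : F} (ht : t ≠ 0) :
    totaro a (some t) = (some t, some (1 - t), some (1 - a / t)) := by
  simp [totaro, ht]

theorem exists_eq_some_of_inCube3_totaro {t : P1 F} (h : inCube3 (totaro a t)) :
    ∃ s, s ≠ 0 ∧ s ≠ 1 ∧ t = some s ∧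
      totaro a t = (some s, some (1 - s), some (1 - a / s)) := by
  rcases t with _ | s
  · simp [totaro, inCube3] at h
  · by_cases hs : s = 0
    · simp [totaro, inCube3, hs] at h
    · rw [totaro_some_of_ne_zero a hs] at h ⊢
      exact ⟨s, hs, fun hs1 => h.1 (congrArg some hs1), rfl, rfl⟩

theorem totaro_z₃_eq_zero_and_inCube3_iff (ha0 : a ≠ 0) (ha1 : a ≠ 1) (t : P1 F) :
    ((totaro a t).2.2 = some 0 ∧ inCube3 (totaro a t)) ↔ t = some a := by
  constructor
  · rintro ⟨h0, hcube⟩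
    obtain ⟨s, hs, -, rfl, heq⟩ := exists_eq_some_of_inCube3_totaro a hcube
    rw [heq, Option.some_inj, sub_eq_zero, eq_comm, div_eq_one_iff_eq hs] at h0
    rw [h0]
  · rintro rfl
    rw [totaro_some_of_ne_zero a ha0, div_self ha0, sub_self]
    simp [inCube3, ha0, ha1]

end Totaro

/-- For `a ∉ {0, 1}`, the Totaro cycle `C_a` (the image of
`t ↦ (t, 1-t, 1-a/t)` intersected with the cube) has algebraic boundary
`∂C_a = [a, 1-a]`, coming only from the face `z₃ = 0`: the intersection of the curve
with `{z₃ = 0}` inside the cube is precisely the point with `(z₁, z₂) = (a, 1-a)`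
(attained at `t = a`), and the intersections with the faces `z₁ = 0`, `z₂ = 0`,
`z₁ = ∞`, `z₂ = ∞`, `z₃ = ∞` inside the cube are all empty (each is empty or has a
coordinate equal to `1`). -/
theorem totaro_cycle_boundary (F : Type) [Field F] [DecidableEq F]
    (a : F) (ha0 : a ≠ 0) (ha1 : a ≠ 1) :
    (∀ t : P1 F, ((totaro a t).2.2 = some 0 ∧ inCube3 (totaro a t)) ↔ t = some a) ∧
    (totaro a (some a)).1 = some a ∧ (totaro a (some a)).2.1 = some (1 - a) ∧
    (∀ t : P1 F, ¬ ((totaro a t).1 = some 0 ∧ inCube3 (totaro a t))) ∧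
    (∀ t : P1 F, ¬ ((totaro a t).2.1 = some 0 ∧ inCube3 (totaro a t))) ∧
    (∀ t : P1 F, ¬ ((totaro a t).1 = none ∧ inCube3 (totaro a t))) ∧
    (∀ t : P1 F, ¬ ((totaro a t).2.1 = none ∧ inCube3 (totaro a t))) ∧
    (∀ t : P1 F, ¬ ((totaro a t).2.2 = none ∧ inCube3 (totaro a t))) := by
  refine ⟨totaro_z₃_eq_zero_and_inCube3_iff a ha0 ha1, by simp [totaro_some_of_ne_zero a ha0],
    by simp [totaro_some_of_ne_zero a ha0], ?_, ?_, ?_, ?_, ?_⟩ <;>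
  · rintro t ⟨hface, hcube⟩
    obtain ⟨s, hs0, hs1, -, heq⟩ := exists_eq_some_of_inCube3_totaro a hcube
    simp [heq, sub_eq_zero, eq_comm (a := (1 : F)), hs0, hs1] at hface
end
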